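/- Let v, w : ℝ^d → ℝ^d be bounded Lipschitz vector fields with Lipschitz constant L > 0, and let μ, ν ∈ M_0^{ac} have equal total mass. Then for every t ≥ 0, W_p(Φ^v_t#μ, Φ^w_t#ν) ≤ e^{((p+1)/p)·L·t} · W_p(μ, ν) + μ(ℝ^d)^{1/p} · (e^{Lt/p}(e^{Lt}−1)/L) · ‖v−w‖_{C^0}, where ‖v−w‖_{C^0} = sup_{x∈ℝ^d} |v(x)−w(x)|. -/

import Mathlib

open MeasureTheory ENNReal Filter Topology

noncomputable section

/-- `ℝ^d` as a Euclidean space. -/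
abbrev Euc (d : ℕ) := EuclideanSpace ℝ (Fin d)

variable {E : Type*} [NormedAddCommGroup E] [MeasurableSpace E]

/-- Total mass `|μ| = μ(ℝ^d)` of a nonnegative measure, as a real number. -/
def mass (μ : Measure E) : ℝ := (μ Set.univ).toReal

/-- Total variation norm `|μ - ν|` of the difference of two nonnegative finite
measures, computed via the Jordan decomposition `(μ - ν) + (ν - μ)`. -/
def tvDist (μ ν : Measure E) : ℝ := ((μ - ν) Set.univ + (ν - μ) Set.univ).toReal

/-- `μ` has finite `p`-th moment. -/
def FinMom (p : ℝ) (μ : Measure E) : Prop :=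
  ∫⁻ x, ENNReal.ofReal (‖x‖ ^ p) ∂μ < ⊤

/-- `π` is a transference plan from `μ` to `ν`: its first and second marginals
are `μ` and `ν` respectively. -/
def IsPlan (π : Measure (E × E)) (μ ν : Measure E) : Prop :=
  π.map Prod.fst = μ ∧ π.map Prod.snd = ν

/-- Transportation cost `∫ |x - y|^p dπ(x,y)` of a plan `π`. -/
def Wcost (p : ℝ) (π : Measure (E × E)) : ℝ≥0∞ :=
  ∫⁻ z, ENNReal.ofReal (dist z.1 z.2 ^ p) ∂π

/-- The Wasserstein distance `W_p(μ,ν) = (inf_π ∫ |x-y|^p dπ)^{1/p}`. -/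
def Wp (p : ℝ) (μ ν : Measure E) : ℝ :=
  ((sInf (Wcost p '' {π | IsPlan π μ ν})) ^ (1 / p)).toReal

/-- The set of admissible values `a|μ-μ̃| + a|ν-ν̃| + b W_p(μ̃,ν̃)` over all
`μ̃, ν̃ ∈ M^p` with `|μ̃| = |ν̃|`. -/
def gwSet (a b p : ℝ) (μ ν : Measure E) : Set ℝ :=
  { r | ∃ μ' ν' : Measure E, IsFiniteMeasure μ' ∧ IsFiniteMeasure ν' ∧
      FinMom p μ' ∧ FinMom p ν' ∧ μ' Set.univ = ν' Set.univ ∧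
      r = a * tvDist μ μ' + a * tvDist ν ν' + b * Wp p μ' ν' }

/-- The generalized Wasserstein distance `W^{a,b}_p`. -/
def GW (a b p : ℝ) (μ ν : Measure E) : ℝ := sInf (gwSet a b p μ ν)

/-- The support of a measure: the set of points all of whose open neighbourhoods
have positive measure. -/
def msupp (μ : Measure E) : Set E := {x : E | ∀ U : Set E, IsOpen U → x ∈ U → μ U ≠ 0}

/-- Weak convergence of a sequence of measures: convergence of integrals of all
bounded continuous functions. -/
def WeakConv {F : Type*} [MeasurableSpace F] [TopologicalSpace F]
    (μs : ℕ → Measure F) (μ : Measure F) : Prop :=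
  ∀ f : F → ℝ, Continuous f → (∃ C : ℝ, ∀ x, |f x| ≤ C) →
    Tendsto (fun n => ∫ x, f x ∂(μs n)) atTop (𝓝 (∫ x, f x ∂μ))

/-- A family of measures is tight if for every `ε > 0` there is a compact set
whose complement has measure less than `ε` for all members of the family. -/
def Tight (F : Set (Measure E)) : Prop :=
  ∀ ε : ℝ, 0 < ε → ∃ K : Set E, IsCompact K ∧ ∀ μ ∈ F, μ Kᶜ < ENNReal.ofReal ε

end

noncomputable section

/-- `μ ∈ M_0^{ac}`: a finite measure, absolutely continuous with respect to the
Lebesgue measure, with bounded support. -/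
def M0ac {d : ℕ} (μ : MeasureTheory.Measure (Euc d)) : Prop :=
  MeasureTheory.IsFiniteMeasure μ ∧ μ ≪ MeasureTheory.volume ∧ Bornology.IsBounded (msupp μ)

/-- `Φ` is the flow of the vector field `v`: `Φ 0 = id` and
`∂_t Φ_t(x) = v(Φ_t(x))`. -/
def IsFlow {d : ℕ} (v : Euc d → Euc d) (Φ : ℝ → Euc d → Euc d) : Prop :=
  (∀ x, Φ 0 x = x) ∧ ∀ x t, HasDerivAt (fun s => Φ s x) (v (Φ t x)) t

end

/-
Grönwall's lemma bounds `dist (Φv t x) (Φw t y)` by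
`e^{Lt} |x - y| + ‖v - w‖ (e^{Lt} - 1) / L`. Pushing a transference plan between `μ` and `ν`
forward by `Φv t × Φw t` gives a plan between the transported measures, and Minkowski's
inequality in `L^p` of the plan turns the pointwise bound into
`W_p(Φv_t#μ, Φw_t#ν) ≤ e^{Lt} W_p(μ, ν) + μ(ℝ^d)^{1/p} ‖v - w‖ (e^{Lt} - 1) / L`,
which is sharper than the claimed estimate. Bounded supports keep the optimal cost finite, so
the bound survives the passage to real numbers.
-/

lemma ENNReal.rpow_mul_rpow_one_div {p : ℝ} (hp : 0 < p) (c X : ℝ≥0∞) :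
    (c ^ p * X) ^ (1 / p) = c * X ^ (1 / p) := by
  rw [ENNReal.mul_rpow_of_nonneg _ _ (by positivity), ← ENNReal.rpow_mul,
    mul_one_div_cancel hp.ne', ENNReal.rpow_one]

section Transport

variable {E : Type*} [MeasurableSpace E]

lemma IsPlan.univ_eq {π : Measure (E × E)} {μ ν : Measure E} (hπ : IsPlan π μ ν) :
    π Set.univ = μ Set.univ := by
  rw [← hπ.1, Measure.map_apply measurable_fst MeasurableSet.univ, Set.preimage_univ]

lemma IsPlan.map_prodMap {π : Measure (E × E)} {μ ν : Measure E} (hπ : IsPlan π μ ν)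
    {f g : E → E} (hf : Measurable f) (hg : Measurable g) :
    IsPlan (π.map (Prod.map f g)) (μ.map f) (ν.map g) := by
  have hfg : Measurable (Prod.map f g) := hf.prodMap hg
  constructor
  · rw [Measure.map_map measurable_fst hfg, ← hπ.1, Measure.map_map hf measurable_fst]
    rfl
  · rw [Measure.map_map measurable_snd hfg, ← hπ.2, Measure.map_map hg measurable_snd]
    rfl

lemma exists_isPlan {μ ν : Measure E} [IsFiniteMeasure ν] (h : μ Set.univ = ν Set.univ) :
    ∃ π, IsPlan π μ ν := by
  by_cases hν : ν = 0
  · have hμ : μ = 0 := by rwa [hν, Measure.coe_zero, Pi.zero_apply,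
      Measure.measure_univ_eq_zero] at h
    exact ⟨0, by simp [hμ], by simp [hν]⟩
  have hν' : ν Set.univ ≠ 0 := by simpa using hν
  refine ⟨(ν Set.univ)⁻¹ • μ.prod ν, ?_, ?_⟩
  · rw [Measure.map_smul, Measure.map_fst_prod, smul_smul,
      ENNReal.inv_mul_cancel hν' (measure_ne_top _ _), one_smul]
  · rw [Measure.map_smul, Measure.map_snd_prod, ← h, smul_smul,
      ENNReal.inv_mul_cancel (h ▸ hν') (h ▸ measure_ne_top _ _), one_smul]

variable [NormedAddCommGroup E]

noncomputable def optCost (p : ℝ) (μ ν : Measure E) : ℝ≥0∞ :=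
  sInf (Wcost p '' {π | IsPlan π μ ν})

lemma Wp_eq_toReal_optCost (p : ℝ) (μ ν : Measure E) :
    Wp p μ ν = (optCost p μ ν ^ (1 / p)).toReal := rfl

lemma msupp_eq_support (μ : Measure E) : msupp μ = μ.support := by
  simp [msupp, Measure.support_eq_forall_isOpen, pos_iff_ne_zero, imp.swap]

variable [SecondCountableTopology E]

lemma Wcost_ne_top_of_isBounded {p : ℝ} (hp : 0 ≤ p) {π : Measure (E × E)} {μ ν : Measure E}
    [IsFiniteMeasure μ] (hπ : IsPlan π μ ν) (hμ : Bornology.IsBounded (msupp μ))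
    (hν : Bornology.IsBounded (msupp ν)) : Wcost p π ≠ ⊤ := by
  obtain ⟨C, hC⟩ := Metric.isBounded_iff.1 (hμ.union hν)
  have hfst : ∀ᵐ z ∂π, z.1 ∈ msupp μ := by
    refine ae_of_ae_map measurable_fst.aemeasurable ?_
    rw [hπ.1, msupp_eq_support]
    exact Measure.support_mem_ae
  have hsnd : ∀ᵐ z ∂π, z.2 ∈ msupp ν := by
    refine ae_of_ae_map measurable_snd.aemeasurable ?_
    rw [hπ.2, msupp_eq_support]
    exact Measure.support_mem_ae
  have hle : Wcost p π ≤ ∫⁻ _, ENNReal.ofReal (C ^ p) ∂π := by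
    refine lintegral_mono_ae ((hfst.and hsnd).mono fun z hz => ?_)
    exact ENNReal.ofReal_le_ofReal (Real.rpow_le_rpow dist_nonneg
      (hC (Or.inl hz.1) (Or.inr hz.2)) hp)
  refine ne_top_of_le_ne_top ?_ hle
  rw [lintegral_const, hπ.univ_eq]
  exact ENNReal.mul_ne_top ENNReal.ofReal_ne_top (measure_ne_top _ _)

lemma optCost_ne_top_of_isBounded {p : ℝ} (hp : 0 ≤ p) {μ ν : Measure E} [IsFiniteMeasure μ]
    [IsFiniteMeasure ν] (h : μ Set.univ = ν Set.univ) (hμ : Bornology.IsBounded (msupp μ))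
    (hν : Bornology.IsBounded (msupp ν)) : optCost p μ ν ≠ ⊤ := by
  obtain ⟨π, hπ⟩ := exists_isPlan h
  exact ne_top_of_le_ne_top (Wcost_ne_top_of_isBounded hp hπ hμ hν) (sInf_le ⟨π, hπ, rfl⟩)

variable [OpensMeasurableSpace E]

lemma measurable_ofReal_dist_rpow (p : ℝ) :
    Measurable fun z : E × E => ENNReal.ofReal (dist z.1 z.2 ^ p) :=
  ((measurable_fst.dist measurable_snd).pow_const p).ennreal_ofReal

lemma Wcost_map_rpow_le {p : ℝ} (hp : 1 ≤ p) {π : Measure (E × E)} {μ ν : Measure E}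
    (hπ : IsPlan π μ ν) {f g : E → E} (hf : Measurable f) (hg : Measurable g) {a b : ℝ}
    (ha : 0 ≤ a) (hb : 0 ≤ b) (hfg : ∀ x y, dist (f x) (g y) ≤ a * dist x y + b) :
    Wcost p (π.map (Prod.map f g)) ^ (1 / p) ≤
      ENNReal.ofReal a * Wcost p π ^ (1 / p) + ENNReal.ofReal b * μ Set.univ ^ (1 / p) := by
  have hp0 : 0 < p := zero_lt_one.trans_le hp
  set F : E × E → ℝ≥0∞ := fun z => ENNReal.ofReal (a * dist z.1 z.2)
  have hF : Measurable F :=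
    (measurable_const.mul (measurable_fst.dist measurable_snd)).ennreal_ofReal
  have hpt : ∀ z : E × E,
      ENNReal.ofReal (dist (f z.1) (g z.2) ^ p) ≤ (F z + ENNReal.ofReal b) ^ p := by
    intro z
    rw [← ENNReal.ofReal_rpow_of_nonneg dist_nonneg hp0.le,
      ← ENNReal.ofReal_add (by positivity) hb]
    gcongr
    exact hfg z.1 z.2
  have hFp : ∫⁻ z, F z ^ p ∂π = ENNReal.ofReal a ^ p * Wcost p π := by
    simp only [F, ENNReal.ofReal_mul ha, ENNReal.mul_rpow_of_nonneg _ _ hp0.le,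
      ENNReal.ofReal_rpow_of_nonneg dist_nonneg hp0.le]
    rw [lintegral_const_mul _ (measurable_ofReal_dist_rpow p), Wcost]
  calc Wcost p (π.map (Prod.map f g)) ^ (1 / p)
      ≤ (∫⁻ z, (F z + ENNReal.ofReal b) ^ p ∂π) ^ (1 / p) := by
        rw [Wcost, lintegral_map (measurable_ofReal_dist_rpow p) (hf.prodMap hg)]
        gcongr with z
        exact hpt z
    _ ≤ (∫⁻ z, F z ^ p ∂π) ^ (1 / p) + (∫⁻ _, ENNReal.ofReal b ^ p ∂π) ^ (1 / p) :=
        ENNReal.lintegral_Lp_add_le hF.aemeasurable aemeasurable_const hp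
    _ = ENNReal.ofReal a * Wcost p π ^ (1 / p) + ENNReal.ofReal b * μ Set.univ ^ (1 / p) := by
        rw [hFp, lintegral_const, hπ.univ_eq, ENNReal.rpow_mul_rpow_one_div hp0,
          ENNReal.rpow_mul_rpow_one_div hp0]

lemma optCost_map_rpow_le {p : ℝ} (hp : 1 ≤ p) {μ ν : Measure E} {f g : E → E}
    (hf : Measurable f) (hg : Measurable g) {a b : ℝ} (ha : 0 < a) (hb : 0 ≤ b)
    (hfg : ∀ x y, dist (f x) (g y) ≤ a * dist x y + b) :
    optCost p (μ.map f) (ν.map g) ^ (1 / p) ≤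
      ENNReal.ofReal a * optCost p μ ν ^ (1 / p) + ENNReal.ofReal b * μ Set.univ ^ (1 / p) := by
  have hp' : 0 < 1 / p := by positivity
  set φ : ℝ≥0∞ → ℝ≥0∞ := fun c =>
    ENNReal.ofReal a * c ^ (1 / p) + ENNReal.ofReal b * μ Set.univ ^ (1 / p)
  have hφ : Monotone φ := fun c c' h => by dsimp only [φ]; gcongr
  have hφc : Continuous φ :=
    ((ENNReal.continuous_const_mul ENNReal.ofReal_ne_top).comp
      (ENNReal.continuous_rpow_const)).add continuous_const
  have hφtop : φ ⊤ = ⊤ := by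
    simp only [φ, ENNReal.top_rpow_of_pos hp', ENNReal.mul_top (ENNReal.ofReal_pos.2 ha).ne',
      top_add]
  change _ ≤ φ (optCost p μ ν)
  unfold optCost
  rw [hφ.map_sInf_of_continuousAt hφc.continuousAt hφtop]
  refine le_sInf ?_
  rintro _ ⟨_, ⟨π, hπ, rfl⟩, rfl⟩
  have hmap : optCost p (μ.map f) (ν.map g) ≤ Wcost p (π.map (Prod.map f g)) :=
    sInf_le (Set.mem_image_of_mem (Wcost p) (hπ.map_prodMap hf hg))
  exact (ENNReal.rpow_le_rpow hmap hp'.le).trans (Wcost_map_rpow_le hp hπ hf hg ha.le hb hfg)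

lemma Wp_map_le {p : ℝ} (hp : 1 ≤ p) {μ ν : Measure E} [IsFiniteMeasure μ] {f g : E → E}
    (hf : Measurable f) (hg : Measurable g) {a b : ℝ} (ha : 0 < a) (hb : 0 ≤ b)
    (hfg : ∀ x y, dist (f x) (g y) ≤ a * dist x y + b) (hμν : optCost p μ ν ≠ ⊤) :
    Wp p (μ.map f) (ν.map g) ≤ a * Wp p μ ν + b * mass μ ^ (1 / p) := by
  have hp' : 0 ≤ 1 / p := by positivity
  have h₁ : ENNReal.ofReal a * optCost p μ ν ^ (1 / p) ≠ ⊤ :=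
    ENNReal.mul_ne_top ENNReal.ofReal_ne_top (ENNReal.rpow_ne_top_of_nonneg hp' hμν)
  have h₂ : ENNReal.ofReal b * μ Set.univ ^ (1 / p) ≠ ⊤ :=
    ENNReal.mul_ne_top ENNReal.ofReal_ne_top
      (ENNReal.rpow_ne_top_of_nonneg hp' (measure_ne_top _ _))
  rw [Wp_eq_toReal_optCost, Wp_eq_toReal_optCost]
  calc (optCost p (μ.map f) (ν.map g) ^ (1 / p)).toReal
      ≤ (ENNReal.ofReal a * optCost p μ ν ^ (1 / p)
          + ENNReal.ofReal b * μ Set.univ ^ (1 / p)).toReal :=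
        ENNReal.toReal_mono (ENNReal.add_ne_top.2 ⟨h₁, h₂⟩)
          (optCost_map_rpow_le hp hf hg ha hb hfg)
    _ = a * (optCost p μ ν ^ (1 / p)).toReal + b * mass μ ^ (1 / p) := by
        rw [ENNReal.toReal_add h₁ h₂, ENNReal.toReal_mul, ENNReal.toReal_mul,
          ENNReal.toReal_ofReal ha.le, ENNReal.toReal_ofReal hb,
          ← ENNReal.toReal_rpow (μ Set.univ), mass]

end Transport

section Flow

variable {d : ℕ} {v w : Euc d → Euc d} {Φv Φw : ℝ → Euc d → Euc d}

lemma IsFlow.dist_le_gronwallBound (hΦv : IsFlow v Φv) (hΦw : IsFlow w Φw) {K : NNReal}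
    (hv : LipschitzWith K v) {D : ℝ} (hD : ∀ x, dist (w x) (v x) ≤ D) {t : ℝ} (ht : 0 ≤ t)
    (x y : Euc d) : dist (Φv t x) (Φw t y) ≤ gronwallBound (dist x y) K D t := by
  have := dist_le_of_approx_trajectories_ODE (v := fun _ => v) (f := fun s => Φv s x)
    (g := fun s => Φw s y) (fun _ => hv)
    (fun s _ => (hΦv.2 x s).continuousAt.continuousWithinAt)
    (fun s _ => (hΦv.2 x s).hasDerivWithinAt) (fun s _ => (dist_self _).le)
    (fun s _ => (hΦw.2 y s).continuousAt.continuousWithinAt)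
    (fun s _ => (hΦw.2 y s).hasDerivWithinAt) (fun s _ => hD _)
    (by rw [hΦv.1, hΦw.1]) t ⟨ht, le_rfl⟩
  simpa using this

lemma IsFlow.lipschitzWith (hΦv : IsFlow v Φv) {K : NNReal} (hv : LipschitzWith K v) {t : ℝ}
    (ht : 0 ≤ t) : LipschitzWith (Real.toNNReal (Real.exp (K * t))) (Φv t) :=
  .of_dist_le' fun x y => by
    simpa [gronwallBound_ε0, mul_comm] using
      hΦv.dist_le_gronwallBound hΦv hv (D := 0) (by simp) ht x y

end Flow

lemma exp_mul_add_le_of_nonneg {p L t W m D : ℝ} (hp : 0 < p) (hL : 0 < L) (ht : 0 ≤ t)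
    (hW : 0 ≤ W) (hm : 0 ≤ m) (hD : 0 ≤ D) :
    Real.exp (L * t) * W + D / L * (Real.exp (L * t) - 1) * m ≤
      Real.exp ((p + 1) / p * L * t) * W
        + m * (Real.exp (L * t / p) * (Real.exp (L * t) - 1) / L) * D := by
  have hLt : 0 ≤ L * t := by positivity
  have hexp : 0 ≤ Real.exp (L * t) - 1 := sub_nonneg.2 (Real.one_le_exp hLt)
  refine add_le_add (mul_le_mul_of_nonneg_right ?_ hW) ?_
  · rw [Real.exp_le_exp, add_div, div_self hp.ne']
    nlinarith [show 0 ≤ 1 / p * (L * t) by positivity]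
  · calc D / L * (Real.exp (L * t) - 1) * m
        = m * (1 * (Real.exp (L * t) - 1) / L) * D := by ring
      _ ≤ _ := by gcongr; exact Real.one_le_exp (by positivity)

theorem wp_flow_flow_two_fields_general {d : ℕ} (p : ℝ) (hp : 1 ≤ p)
    (v w : Euc d → Euc d) (L : ℝ) (hLpos : 0 < L)
    (hLv : ∀ x y, ‖v x - v y‖ ≤ L * ‖x - y‖) (hLw : ∀ x y, ‖w x - w y‖ ≤ L * ‖x - y‖)
    (hbv : ∃ C : ℝ, ∀ x, ‖v x‖ ≤ C) (hbw : ∃ C : ℝ, ∀ x, ‖w x‖ ≤ C)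
    (Φv Φw : ℝ → Euc d → Euc d) (hΦv : IsFlow v Φv) (hΦw : IsFlow w Φw)
    (μ ν : Measure (Euc d)) (hμ : M0ac μ) (hν : M0ac ν)
    (hm : μ Set.univ = ν Set.univ) (t : ℝ) (ht : 0 ≤ t) :
    Wp p (μ.map (Φv t)) (ν.map (Φw t)) ≤ Real.exp ((p + 1) / p * L * t) * Wp p μ ν
      + mass μ ^ (1 / p) * (Real.exp (L * t / p) * (Real.exp (L * t) - 1) / L)
        * (⨆ x, ‖v x - w x‖) := by
  obtain ⟨hμfin, -, hμb⟩ := hμ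
  obtain ⟨hνfin, -, hνb⟩ := hν
  obtain ⟨Cv, hCv⟩ := hbv
  obtain ⟨Cw, hCw⟩ := hbw
  set D := ⨆ x, ‖v x - w x‖
  have hD : ∀ x, dist (w x) (v x) ≤ D := fun x => by
    rw [dist_comm, dist_eq_norm]
    refine le_ciSup (f := fun x => ‖v x - w x‖) ⟨Cv + Cw, ?_⟩ x
    rintro _ ⟨y, rfl⟩
    exact (norm_sub_le _ _).trans (add_le_add (hCv y) (hCw y))
  have hv : LipschitzWith (Real.toNNReal L) v := .of_dist_le' fun x y => by
    simpa only [dist_eq_norm] using hLv x y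
  have hw : LipschitzWith (Real.toNNReal L) w := .of_dist_le' fun x y => by
    simpa only [dist_eq_norm] using hLw x y
  have hflow : ∀ x y, dist (Φv t x) (Φw t y) ≤
      Real.exp (L * t) * dist x y + D / L * (Real.exp (L * t) - 1) := fun x y => by
    simpa [gronwallBound_of_K_ne_0 hLpos.ne', hLpos.le, mul_comm (dist x y)] using
      hΦv.dist_le_gronwallBound hΦw hv hD ht x y
  have hD0 : 0 ≤ D := dist_nonneg.trans (hD 0)
  calc Wp p (μ.map (Φv t)) (ν.map (Φw t))
      ≤ Real.exp (L * t) * Wp p μ ν + D / L * (Real.exp (L * t) - 1) * mass μ ^ (1 / p) :=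
        Wp_map_le hp (hΦv.lipschitzWith hv ht).continuous.measurable
          (hΦw.lipschitzWith hw ht).continuous.measurable (Real.exp_pos _)
          (mul_nonneg (div_nonneg hD0 hLpos.le) (sub_nonneg.2 (Real.one_le_exp (by positivity))))
          hflow
          (optCost_ne_top_of_isBounded (by linarith) hm hμb hνb)
    _ ≤ _ := exp_mul_add_le_of_nonneg (by linarith) hLpos ht ENNReal.toReal_nonneg
          (Real.rpow_nonneg ENNReal.toReal_nonneg _) hD0

theorem wp_flow_flow_two_fields {d : ℕ} (hd : 1 ≤ d) (p : ℝ) (hp : 1 ≤ p)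
    (v w : Euc d → Euc d) (L : ℝ) (hLpos : 0 < L)
    (hLv : ∀ x y, ‖v x - v y‖ ≤ L * ‖x - y‖) (hLw : ∀ x y, ‖w x - w y‖ ≤ L * ‖x - y‖)
    (hbv : ∃ C : ℝ, ∀ x, ‖v x‖ ≤ C) (hbw : ∃ C : ℝ, ∀ x, ‖w x‖ ≤ C)
    (Φv Φw : ℝ → Euc d → Euc d) (hΦv : IsFlow v Φv) (hΦw : IsFlow w Φw)
    (μ ν : Measure (Euc d)) (hμ : M0ac μ) (hν : M0ac ν)
    (hm : μ Set.univ = ν Set.univ) (t : ℝ) (ht : 0 ≤ t) :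
    Wp p (μ.map (Φv t)) (ν.map (Φw t)) ≤ Real.exp ((p + 1) / p * L * t) * Wp p μ ν
      + mass μ ^ (1 / p) * (Real.exp (L * t / p) * (Real.exp (L * t) - 1) / L)
        * (⨆ x, ‖v x - w x‖) :=
  wp_flow_flow_two_fields_general p hp v w L hLpos hLv hLw hbv hbw Φv Φw hΦv hΦw μ ν hμ hν hm t ht
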